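/- arXiv:2509.25425 — 3 statements merged into one kernel-verified Lean document; each statement's English description precedes it below -/
import Mathlib

section
/- Define a sequence P'_n by P'_1 := J_{2,1} ⊗ K_2 ⊗ J_{t,2t} and, for n ≥ 2, P'_n := J_{2^n,1} ⊗ K_2 ⊗ α_{2^{n−1}}(P'_{n−1}) ⊗ J_{1,2}. Then P'_n = P_n for every n ≥ 1. -/
open Matrix Kronecker

def Jmat (m l : ℕ) : Matrix (Fin m) (Fin l) ℤ := Matrix.of fun _ _ => 1
def Kmat (m : ℕ) : Matrix (Fin m) (Fin m) ℤ :=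
  Matrix.of fun i j => if (j : ℕ) = m - 1 - (i : ℕ) then 1 else 0
def kron {m n p q : ℕ} (A : Matrix (Fin m) (Fin n) ℤ) (B : Matrix (Fin p) (Fin q) ℤ) :
    Matrix (Fin (m * p)) (Fin (n * q)) ℤ :=
  Matrix.reindex finProdFinEquiv finProdFinEquiv (A ⊗ₖ B)
def castM {m n m' n' : ℕ} (hm : m = m') (hn : n = n') (A : Matrix (Fin m) (Fin n) ℤ) :
    Matrix (Fin m') (Fin n') ℤ :=
  Matrix.reindex (finCongr hm) (finCongr hn) A
def alphaM {m l : ℕ} (s : ℕ) (X : Matrix (Fin m) (Fin l) ℤ) :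
    Matrix (Fin (m / s)) (Fin l) ℤ :=
  Matrix.of fun i j => X (Fin.castLE (Nat.div_le_self m s) i) j
def vstack {m₁ m₂ l : ℕ} (X : Matrix (Fin m₁) (Fin l) ℤ) (Y : Matrix (Fin m₂) (Fin l) ℤ) :
    Matrix (Fin (m₁ + m₂)) (Fin l) ℤ :=
  Matrix.reindex finSumFinEquiv (Equiv.refl _) (Matrix.fromRows X Y)
def hstack {m l₁ l₂ : ℕ} (X : Matrix (Fin m) (Fin l₁) ℤ) (Y : Matrix (Fin m) (Fin l₂) ℤ) :
    Matrix (Fin m) (Fin (l₁ + l₂)) ℤ :=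
  Matrix.reindex (Equiv.refl _) finSumFinEquiv (Matrix.fromCols X Y)
def block2 {a b c d : ℕ} (A : Matrix (Fin a) (Fin c) ℤ) (B : Matrix (Fin a) (Fin d) ℤ)
    (C : Matrix (Fin b) (Fin c) ℤ) (D : Matrix (Fin b) (Fin d) ℤ) :
    Matrix (Fin (a + b)) (Fin (c + d)) ℤ :=
  Matrix.reindex finSumFinEquiv finSumFinEquiv (Matrix.fromBlocks A B C D)
lemma four_pow_eq (n : ℕ) : (4 : ℕ) ^ n = 2 ^ n * 2 ^ n := by
  rw [show (4 : ℕ) = 2 * 2 from rfl, mul_pow]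
lemma t_four_pow_div (t n : ℕ) : t * 4 ^ n / 2 ^ n = t * 2 ^ n := by
  rw [four_pow_eq, ← mul_assoc, Nat.mul_div_cancel _ (by positivity)]
def vnum (v t n : ℕ) : ℕ := (v + (2 ^ (n + 1) - 4) * t) * 2 ^ (n - 1)
lemma vnum_one (v t : ℕ) : vnum v t 1 = v := by norm_num [vnum]
lemma vnum_succ (v t n : ℕ) :
    vnum v t (n + 2) = 2 * vnum v t (n + 1) + 2 * (t * 4 ^ (n + 1)) := by
  unfold vnum
  simp only [show n + 2 + 1 = n + 3 from rfl, show n + 2 - 1 = n + 1 from rfl,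
    show n + 1 + 1 = n + 2 from rfl, show n + 1 - 1 = n from rfl]
  have h2 : (4 : ℕ) ≤ 2 ^ (n + 2) := by
    calc (4 : ℕ) = 2 ^ 2 := rfl
    _ ≤ 2 ^ (n + 2) := Nat.pow_le_pow_right (by norm_num) (by omega)
  have h3 : (4 : ℕ) ≤ 2 ^ (n + 3) := le_trans h2 (Nat.pow_le_pow_right (by norm_num) (by omega))
  rw [four_pow_eq]
  zify [h2, h3]
  ring
def Pmat (t n : ℕ) : Matrix (Fin (t * 4 ^ n)) (Fin (t * 4 ^ n)) ℤ :=
  castM (by rw [four_pow_eq]; ring) (by rw [four_pow_eq]; ring)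
    (kron (kron (Jmat (2 ^ n) 1) (Kmat (2 ^ n))) (Jmat t (t * 2 ^ n)))
def Pone (t : ℕ) : Matrix (Fin (4 * t)) (Fin (4 * t)) ℤ :=
  castM (by ring) (by ring) (kron (kron (Jmat 2 1) (Kmat 2)) (Jmat t (2 * t)))

/-- The recursively defined sequence `P'_n` of Lemma 2. -/
def P'mat (t : ℕ) : (n : ℕ) → Matrix (Fin (t * 4 ^ n)) (Fin (t * 4 ^ n)) ℤ
  | 0 => 0
  | 1 => castM (by ring) (by ring) (kron (kron (Jmat 2 1) (Kmat 2)) (Jmat t (2 * t)))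
  | (n + 2) =>
      castM
        (by rw [t_four_pow_div, four_pow_eq]; ring)
        (by ring)
        (kron (kron (kron (Jmat (2 ^ (n + 2)) 1) (Kmat 2))
          (alphaM (2 ^ (n + 1)) (P'mat t (n + 1)))) (Jmat 1 2))

/-- The recursively defined sequence `B_n` (with `B_1` given). -/
def Bmat (t v : ℕ) (B₁ : Matrix (Fin v) (Fin (4 * t)) ℤ) :
    (n : ℕ) → Matrix (Fin (vnum v t n)) (Fin (t * 4 ^ n)) ℤ
  | 0 => 0
  | 1 => castM (vnum_one v t).symm (by ring) B₁
  | (n + 2) =>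
      castM (by rw [vnum_succ]; try ring) (by ring)
        (vstack (kron (kron (Kmat 2) (Bmat t v B₁ (n + 1))) (Jmat 1 2))
          (kron (kron (1 : Matrix (Fin 2) (Fin 2) ℤ) (Pmat t (n + 1))) (Jmat 1 2)))

/-- The recursively defined sequence `C_n` (with `C_1` given). -/
def Cmat (t v : ℕ) (C₁ : Matrix (Fin (4 * t)) (Fin v) ℤ) :
    (n : ℕ) → Matrix (Fin (t * 4 ^ n)) (Fin (vnum v t n)) ℤ
  | 0 => 0
  | 1 => castM (by ring) (vnum_one v t).symm C₁
  | (n + 2) =>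
      castM (by rw [t_four_pow_div, four_pow_eq]; ring) (by rw [vnum_succ]; try ring)
        (hstack
          (kron (kron (Jmat (2 ^ (n + 2)) 1) (1 : Matrix (Fin 2) (Fin 2) ℤ))
            (alphaM (2 ^ (n + 1)) (Cmat t v C₁ (n + 1))))
          (kron (kron (Jmat (2 ^ (n + 2)) 1) (1 : Matrix (Fin 2) (Fin 2) ℤ))
            (alphaM (2 ^ (n + 1)) (Pmat t (n + 1)))))

/-- The recursively defined sequence `A_n` (with `A_1`, `B_1`, `C_1` given). -/
def Amat (t v : ℕ) (A₁ : Matrix (Fin v) (Fin v) ℤ) (B₁ : Matrix (Fin v) (Fin (4 * t)) ℤ)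
    (C₁ : Matrix (Fin (4 * t)) (Fin v) ℤ) :
    (n : ℕ) → Matrix (Fin (vnum v t n)) (Fin (vnum v t n)) ℤ
  | 0 => 0
  | 1 => castM (vnum_one v t).symm (vnum_one v t).symm A₁
  | (n + 2) =>
      castM (by rw [vnum_succ]) (by rw [vnum_succ])
        (block2 (kron (1 : Matrix (Fin 2) (Fin 2) ℤ) (Amat t v A₁ B₁ C₁ (n + 1)))
          (kron (1 : Matrix (Fin 2) (Fin 2) ℤ) (Bmat t v B₁ (n + 1)))
          (kron (Kmat 2) (Cmat t v C₁ (n + 1)))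
          (kron (Kmat 2) (Pmat t (n + 1))))

/-!
Entrywise, `P_n(i, j) = 1` exactly when `⌊i/t⌋ mod 2^n + ⌊j/(t·2^n)⌋ = 2^n - 1`, an antidiagonal
condition. Writing both indices at size `2^(n+1)` as a leading binary digit and a remainder modulo
`2^n`, this condition splits into the `K_2` condition on the leading digits and the condition for
`P_n` on the remainders; that is precisely the entry of `J ⊗ K_2 ⊗ α(P_n) ⊗ J_{1,2}`, because the
first `t·2^n` rows of `P_n` already contain every row pattern of `P_n`.
-/

lemma kron_apply {m n p q : ℕ} (A : Matrix (Fin m) (Fin n) ℤ) (B : Matrix (Fin p) (Fin q) ℤ)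
    (i : Fin (m * p)) (j : Fin (n * q)) :
    kron A B i j = A i.divNat j.divNat * B i.modNat j.modNat := rfl

lemma castM_apply {m n m' n' : ℕ} (hm : m = m') (hn : n = n') (A : Matrix (Fin m) (Fin n) ℤ)
    (i : Fin m') (j : Fin n') : castM hm hn A i j = A (i.cast hm.symm) (j.cast hn.symm) := rfl

lemma alphaM_apply {m l : ℕ} (s : ℕ) (X : Matrix (Fin m) (Fin l) ℤ) (i : Fin (m / s))
    (j : Fin l) :
    alphaM s X i j = X (i.castLE (Nat.div_le_self m s)) j := rfl

lemma Jmat_apply (m l : ℕ) (i : Fin m) (j : Fin l) : Jmat m l i j = 1 := rfl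

lemma Kmat_apply (m : ℕ) (i j : Fin m) : Kmat m i j = if (i : ℕ) + j + 1 = m then 1 else 0 := by
  have := i.isLt
  simp only [Kmat, Matrix.of_apply]
  exact if_congr (by omega) rfl rfl

lemma Pmat_apply (t n : ℕ) (i j : Fin (t * 4 ^ n)) :
    Pmat t n i j = if (i : ℕ) / t % 2 ^ n + j / (t * 2 ^ n) + 1 = 2 ^ n then 1 else 0 := by
  have hj : (j : ℕ) / (t * 2 ^ n) < 2 ^ n :=
    Nat.div_lt_of_lt_mul (by simpa [four_pow_eq, mul_assoc] using j.isLt)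
  simp only [Pmat, castM_apply, kron_apply, Jmat_apply, Kmat_apply, one_mul, mul_one,
    Fin.coe_divNat, Fin.coe_modNat, Fin.val_cast, Nat.mod_eq_of_lt hj]

lemma P'mat_one (t : ℕ) : P'mat t 1 = Pmat t 1 := by
  ext i j
  have hj : (j : ℕ) / (2 * t) < 2 := Nat.div_lt_of_lt_mul (by linarith [j.isLt])
  simp only [Pmat_apply, P'mat, castM_apply, kron_apply, Jmat_apply, Kmat_apply, one_mul, mul_one,
    Fin.coe_divNat, Fin.coe_modNat, Fin.val_cast, Nat.mod_eq_of_lt hj, pow_one, mul_comm t 2]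

lemma add_two_digits_eq_iff {m b c x y : ℕ} (hb : b < 2) (hc : c < 2) (hx : x < m) (hy : y < m) :
    b * m + x + (c * m + y) + 1 = 2 * m ↔ b + c + 1 = 2 ∧ x + y + 1 = m := by
  interval_cases b <;> interval_cases c <;> omega

lemma antidiagonal_index_two_mul_iff {t m a b : ℕ} (hm : 0 < m) (hb : b < t * (m * m) * 2 * 2) :
    a / t % (2 * m) + b / (t * (2 * m)) + 1 = 2 * m ↔
      a / (t * m) % 2 + b / 2 / (t * (m * m)) % 2 + 1 = 2 ∧
        a % (t * m) / t % m + b / 2 % (t * (m * m)) / (t * m) + 1 = m := by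
  have ht : 0 < t := Nat.pos_of_ne_zero fun h => by simp [h] at hb
  have hrow : a / t % (2 * m) = a / (t * m) % 2 * m + a % (t * m) / t % m := by
    rw [mul_comm 2 m, Nat.mod_mul, Nat.mod_mul_right_div_self, Nat.div_div_eq_div_mul, Nat.mod_mod]
    ring
  have hcol :
      b / (t * (2 * m)) = b / 2 / (t * (m * m)) % 2 * m + b / 2 % (t * (m * m)) / (t * m) := by
    have hc : b / 2 / (t * (m * m)) < 2 := Nat.div_lt_of_lt_mul (Nat.div_lt_of_lt_mul (by linarith))
    rw [Nat.mod_eq_of_lt hc, show t * (2 * m) = 2 * (t * m) by ring, ← Nat.div_div_eq_div_mul,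
      ← mul_assoc, Nat.mod_mul_right_div_self,
      ← Nat.div_div_eq_div_mul (b / 2) (t * m) m, Nat.div_add_mod']
  have hy : b / 2 % (t * (m * m)) / (t * m) < m :=
    Nat.div_lt_of_lt_mul (by rw [← mul_assoc]; exact Nat.mod_lt _ (by positivity))
  rw [hrow, hcol]
  exact add_two_digits_eq_iff (Nat.mod_lt _ two_pos) (Nat.mod_lt _ two_pos) (Nat.mod_lt _ hm) hy

lemma P'mat_succ_succ (t n : ℕ) (ih : P'mat t (n + 1) = Pmat t (n + 1)) :
    P'mat t (n + 2) = Pmat t (n + 2) := by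
  ext i j
  simp only [Pmat_apply, P'mat, castM_apply, kron_apply, alphaM_apply, ih, Jmat_apply,
    Kmat_apply, one_mul, mul_one, Fin.coe_divNat, Fin.coe_modNat, Fin.val_cast, Fin.val_castLE,
    t_four_pow_div, ite_zero_mul_ite_zero, Nat.div_one]
  have hj : (j : ℕ) < t * (2 ^ (n + 1) * 2 ^ (n + 1)) * 2 * 2 :=
    calc (j : ℕ) < t * 4 ^ (n + 2) := j.isLt
      _ = t * (2 ^ (n + 1) * 2 ^ (n + 1)) * 2 * 2 := by rw [four_pow_eq]; ring
  have key := antidiagonal_index_two_mul_iff (a := i) (by positivity) hj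
  rw [← four_pow_eq, ← pow_succ'] at key
  exact if_congr key.symm rfl rfl

theorem P'mat_eq_Pmat_general (t n : ℕ) (hn : 1 ≤ n) :
    P'mat t n = Pmat t n := by
  induction n, hn using Nat.le_induction with
  | base => exact P'mat_one t
  | succ n hn ih =>
    obtain ⟨k, rfl⟩ := Nat.exists_eq_add_of_le' hn
    exact P'mat_succ_succ t k ih

/-- Lemma 2: the recursively defined sequence `P'_n` coincides with `P_n`. -/
theorem P'mat_eq_Pmat (t n : ℕ) (ht : 0 < t) (hn : 1 ≤ n) :
    P'mat t n = Pmat t n :=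
  P'mat_eq_Pmat_general t n hn
end

section
/- For every n ≥ 1, each row of the matrix C_n contains exactly k + (2^n − 2)·t ones; equivalently, C_n · J = (k + (2^n − 2)t) · J (of the appropriate rectangular sizes). -/
open Matrix Kronecker

/-! Every block of the recursion for `C_n` has constant row sums, and row sums are multiplicative
under Kronecker products, additive under horizontal concatenation, and unchanged by reindexing or
by discarding rows. With `r_n` the row sum of `C_n` this gives `r_1 = k` and
`r_{n+1} = r_n + t·2^n`, hence `r_n = k + (2^n - 2)t`. -/

section RowSum

variable {l m n m' n' R : Type*} [Fintype n]

def HasRowSum [AddCommMonoid R] (A : Matrix m n R) (c : R) : Prop :=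
  ∀ i, ∑ j, A i j = c

theorem HasRowSum.submatrix [AddCommMonoid R] [Fintype n'] {A : Matrix m n R} {c : R}
    (hA : HasRowSum A c) (f : m' → m) (e : n' ≃ n) : HasRowSum (A.submatrix f e) c := fun i => by
  simpa only [submatrix_apply] using (e.sum_comp (A (f i))).trans (hA (f i))

theorem HasRowSum.reindex [AddCommMonoid R] [Fintype n'] {A : Matrix m n R} {c : R}
    (hA : HasRowSum A c) (e₁ : m ≃ m') (e₂ : n ≃ n') : HasRowSum (reindex e₁ e₂ A) c :=
  hA.submatrix _ _

theorem HasRowSum.kroneckerMap [NonUnitalNonAssocSemiring R] [Fintype n'] {A : Matrix m n R}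
    {B : Matrix m' n' R} {a b : R} (hA : HasRowSum A a) (hB : HasRowSum B b) :
    HasRowSum (A ⊗ₖ B) (a * b) := fun ⟨i, i'⟩ => by
  rw [← hA i, ← hB i', Fintype.sum_mul_sum, Fintype.sum_prod_type]
  rfl

theorem HasRowSum.fromCols [AddCommMonoid R] [Fintype n'] {A : Matrix m n R}
    {B : Matrix m n' R} {a b : R} (hA : HasRowSum A a) (hB : HasRowSum B b) :
    HasRowSum (Matrix.fromCols A B) (a + b) := fun i => by
  simp only [Fintype.sum_sum_type, fromCols_apply_inl, fromCols_apply_inr, hA i, hB i]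

theorem hasRowSum_one [AddCommMonoidWithOne R] [DecidableEq n] :
    HasRowSum (1 : Matrix n n R) 1 := fun i => by
  simp [one_apply]

theorem hasRowSum_of_mul_ones [NonAssocSemiring R] [Fintype l] [Nonempty l] {A : Matrix m n R}
    {c : R} (h : A * Matrix.of (fun _ _ => 1 : n → l → R) = c • Matrix.of fun _ _ => 1) :
    HasRowSum A c := fun i => by
  simpa [mul_apply] using congrFun (congrFun h i) (Classical.arbitrary l)

theorem HasRowSum.mul_ones [NonAssocSemiring R] {A : Matrix m n R} {c : R} (hA : HasRowSum A c) :
    A * Matrix.of (fun _ _ => 1 : n → l → R) = c • Matrix.of fun _ _ => 1 := by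
  ext i j
  simp [mul_apply, hA i]

end RowSum

section RowSumOfBlocks

variable {m n p q : ℕ}

theorem HasRowSum.castM {A : Matrix (Fin m) (Fin n) ℤ} {c : ℤ} (hA : HasRowSum A c) {m' n' : ℕ}
    (hm : m = m') (hn : n = n') : HasRowSum (castM hm hn A) c :=
  hA.reindex _ _

theorem HasRowSum.kron {A : Matrix (Fin m) (Fin n) ℤ} {B : Matrix (Fin p) (Fin q) ℤ} {a b : ℤ}
    (hA : HasRowSum A a) (hB : HasRowSum B b) : HasRowSum (kron A B) (a * b) :=
  (hA.kroneckerMap hB).reindex _ _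

theorem HasRowSum.hstack {A : Matrix (Fin m) (Fin n) ℤ} {B : Matrix (Fin m) (Fin q) ℤ} {a b : ℤ}
    (hA : HasRowSum A a) (hB : HasRowSum B b) : HasRowSum (hstack A B) (a + b) :=
  (hA.fromCols hB).reindex _ _

theorem HasRowSum.alphaM {A : Matrix (Fin m) (Fin n) ℤ} {c : ℤ} (hA : HasRowSum A c) (s : ℕ) :
    HasRowSum (alphaM s A) c :=
  hA.submatrix _ (Equiv.refl _)

theorem hasRowSum_Jmat : HasRowSum (Jmat m n) n := fun _ => by
  simp [Jmat]

theorem hasRowSum_Kmat : HasRowSum (Kmat m) 1 := fun i => by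
  have hi : m - 1 - (i : ℕ) < m := by omega
  simp only [Kmat, of_apply, ← Fin.ext_iff (b := ⟨m - 1 - i, hi⟩), Finset.sum_ite_eq',
    Finset.mem_univ, if_true]

end RowSumOfBlocks

theorem hasRowSum_Pmat (t n : ℕ) : HasRowSum (Pmat t n) (t * 2 ^ n) := by
  unfold Pmat
  convert ((hasRowSum_Jmat.kron hasRowSum_Kmat).kron hasRowSum_Jmat).castM _ _ using 1
  push_cast
  ring

theorem hasRowSum_Cmat (t v k : ℕ) (C₁ : Matrix (Fin (4 * t)) (Fin v) ℤ)
    (hC : HasRowSum C₁ k) (n : ℕ) :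
    HasRowSum (Cmat t v C₁ (n + 1)) (k + ((2 : ℤ) ^ (n + 1) - 2) * t) := by
  induction n with
  | zero =>
    rw [Cmat]
    simpa using hC.castM _ _
  | succ n ih =>
    rw [Cmat]
    have hJ1 := (hasRowSum_Jmat (m := 2 ^ (n + 2)) (n := 1)).kron (hasRowSum_one (n := Fin 2))
    have hPmat := (hasRowSum_Pmat t (n + 1)).alphaM (2 ^ (n + 1))
    convert ((hJ1.kron (ih.alphaM _)).hstack (hJ1.kron hPmat)).castM _ _ using 1
    push_cast
    ring

theorem Cmat_row_sum_general
    (t v k : ℕ) (hv : 0 < v)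
    (C₁ : Matrix (Fin (4 * t)) (Fin v) ℤ)
    (hCJ : C₁ * Jmat v v = (k : ℤ) • Jmat (4 * t) v)
    (n : ℕ) (hn : 1 ≤ n) :
    Cmat t v C₁ n * Jmat (vnum v t n) (vnum v t n) =
      ((k : ℤ) + ((2 : ℤ) ^ n - 2) * t) • Jmat (t * 4 ^ n) (vnum v t n) := by
  obtain ⟨n, rfl⟩ : ∃ m, n = m + 1 := ⟨n - 1, by omega⟩
  have : Nonempty (Fin v) := ⟨⟨0, hv⟩⟩
  exact (hasRowSum_Cmat t v k C₁ (hasRowSum_of_mul_ones hCJ) n).mul_ones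

/-- Lemma 3(3): each row of `C_n` contains exactly `k + (2^n − 2)t` ones. -/
theorem Cmat_row_sum
    (t v k : ℕ) (ht : 0 < t) (hv : 0 < v) (hk : 0 < k)
    (B₁ : Matrix (Fin v) (Fin (4 * t)) ℤ) (C₁ : Matrix (Fin (4 * t)) (Fin v) ℤ)
    (hB01 : ∀ i j, B₁ i j = 0 ∨ B₁ i j = 1) (hC01 : ∀ i j, C₁ i j = 0 ∨ C₁ i j = 1)
    (hBJ : B₁ * Jmat (4 * t) (4 * t) = (2 * (t : ℤ)) • Jmat v (4 * t))
    (hJB : Jmat v v * B₁ = (k : ℤ) • Jmat v (4 * t))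
    (hCJ : C₁ * Jmat v v = (k : ℤ) • Jmat (4 * t) v)
    (hJC : Jmat (4 * t) (4 * t) * C₁ = (2 * (t : ℤ)) • Jmat (4 * t) v)
    (n : ℕ) (hn : 1 ≤ n) :
    Cmat t v C₁ n * Jmat (vnum v t n) (vnum v t n) =
      ((k : ℤ) + ((2 : ℤ) ^ n - 2) * t) • Jmat (t * 4 ^ n) (vnum v t n) :=
  Cmat_row_sum_general t v k hv C₁ hCJ n hn
end

section
/- For every n ≥ 1, B_n · C_n = t · J_{v_n}, where v_n := (v+(2^{n+1}−4)t)·2^{n−1}. -/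
open Matrix Kronecker

/-!
Every row of `B_n` is the indicator vector of one aligned block of `t·2^n` consecutive columns,
and in every aligned block of `t·2^n` rows each column of `C_n` sums to `t`; so every entry of
`B_n C_n` is such a block sum, namely `t`. Both properties survive the recursion: stacking,
Kronecker products with permutation or all-ones matrices preserve them, and `α_{2^n}` keeps
exactly the first row block of `C_n` and of `P_n`.
-/

def HasBlockIndicatorRows (s : ℕ) {m l : ℕ} (X : Matrix (Fin m) (Fin l) ℤ) : Prop :=
  ∀ i, ∃ b, s * (b + 1) ≤ l ∧ ∀ j : Fin l, X i j = if (j : ℕ) / s = b then 1 else 0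

def HasBlockColSums (s : ℕ) (c : ℤ) {m l : ℕ} (X : Matrix (Fin m) (Fin l) ℤ) : Prop :=
  ∀ j b, s * (b + 1) ≤ m → ∑ i : Fin m with i.val / s = b, X i j = c

lemma Fin.sum_filter_div_eq {M : Type*} [AddCommMonoid M] {m s b : ℕ} (hs : 0 < s)
    (h : s * (b + 1) ≤ m) (f : Fin m → M) :
    ∑ i : Fin m with i.val / s = b, f i =
      ∑ r : Fin s, f ⟨s * b + r, by have := r.isLt; rw [mul_add_one] at h; omega⟩ := by
  rw [mul_add_one] at h
  have hdiv (i : Fin m) (hi : i.val / s = b) :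
      (⟨s * b + i % s, by have := Nat.mod_lt i.val hs; omega⟩ : Fin m) = i :=
    Fin.ext (by simpa only [← hi] using Nat.div_add_mod i s)
  refine Finset.sum_nbij' (fun i => ⟨i % s, Nat.mod_lt _ hs⟩) (fun r => ⟨s * b + r, by omega⟩)
    (by simp) ?_ (fun i hi => hdiv i (by simpa using hi)) ?_ ?_
  · simp [Nat.mul_add_div hs, Nat.div_eq_of_lt]
  · simp [Nat.mod_eq_of_lt]
  · intro i hi
    rw [hdiv i (by simpa using hi)]

lemma mul_eq_smul_Jmat_of_blocks {m l p s : ℕ} {c : ℤ} {B : Matrix (Fin m) (Fin l) ℤ}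
    {C : Matrix (Fin l) (Fin p) ℤ} (hB : HasBlockIndicatorRows s B) (hC : HasBlockColSums s c C) :
    B * C = c • Jmat m p := by
  ext i j
  obtain ⟨b, hb, hrow⟩ := hB i
  simp only [mul_apply, hrow, ite_mul, one_mul, zero_mul]
  rw [← Finset.sum_filter, hC j b hb]
  simp [Jmat]

section Reshaping

variable {s : ℕ} {c : ℤ}

lemma HasBlockIndicatorRows.castM {m l m' l' : ℕ} {X : Matrix (Fin m) (Fin l) ℤ}
    (h : HasBlockIndicatorRows s X) (hm : m = m') (hl : l = l') :
    HasBlockIndicatorRows s (castM hm hl X) := by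
  subst hm hl
  exact h

lemma HasBlockColSums.castM {m l m' l' : ℕ} {X : Matrix (Fin m) (Fin l) ℤ}
    (h : HasBlockColSums s c X) (hm : m = m') (hl : l = l') :
    HasBlockColSums s c (castM hm hl X) := by
  subst hm hl
  exact h

lemma HasBlockIndicatorRows.vstack {m₁ m₂ l : ℕ} {X : Matrix (Fin m₁) (Fin l) ℤ}
    {Y : Matrix (Fin m₂) (Fin l) ℤ} (hX : HasBlockIndicatorRows s X)
    (hY : HasBlockIndicatorRows s Y) : HasBlockIndicatorRows s (vstack X Y) := by
  intro i
  induction i using Fin.addCases with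
  | left i => simpa [_root_.vstack] using hX i
  | right i => simpa [_root_.vstack] using hY i

lemma HasBlockColSums.hstack {m l₁ l₂ : ℕ} {X : Matrix (Fin m) (Fin l₁) ℤ}
    {Y : Matrix (Fin m) (Fin l₂) ℤ} (hX : HasBlockColSums s c X)
    (hY : HasBlockColSums s c Y) : HasBlockColSums s c (hstack X Y) := by
  intro j
  induction j using Fin.addCases with
  | left j => simpa [_root_.hstack] using hX j
  | right j => simpa [_root_.hstack] using hY j

lemma HasBlockColSums.alphaM {m l : ℕ} {X : Matrix (Fin m) (Fin l) ℤ}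
    (h : HasBlockColSums s c X) (hs : 0 < s) (r : ℕ) :
    HasBlockColSums s c (alphaM r X) := by
  intro j b hb
  have hb' := hb.trans (Nat.div_le_self m r)
  rw [Fin.sum_filter_div_eq hs hb, ← h j b hb', Fin.sum_filter_div_eq hs hb']
  rfl

lemma HasBlockColSums.sum_eq {m l : ℕ} {X : Matrix (Fin m) (Fin l) ℤ}
    (h : HasBlockColSums s c X) (hm : m = s) (j : Fin l) : ∑ i, X i j = c := by
  subst hm
  simpa [Nat.div_eq_of_lt] using h j 0 (by simp)

end Reshaping

lemma kron_apply_finProdFinEquiv {m n p q : ℕ} (A : Matrix (Fin m) (Fin n) ℤ)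
    (B : Matrix (Fin p) (Fin q) ℤ) (x : Fin m × Fin p) (y : Fin n × Fin q) :
    kron A B (finProdFinEquiv x) (finProdFinEquiv y) = A x.1 y.1 * B x.2 y.2 := by
  simp [kron]

section Kronecker

variable {s : ℕ}

lemma HasBlockIndicatorRows.kron_Jmat {m l p q : ℕ} {X : Matrix (Fin m) (Fin l) ℤ}
    (h : HasBlockIndicatorRows s X) : HasBlockIndicatorRows (s * q) (kron X (Jmat p q)) := by
  intro i
  obtain ⟨b, hb, hrow⟩ := h i.divNat
  refine ⟨b, by rw [mul_right_comm]; exact Nat.mul_le_mul_right q hb, fun j => ?_⟩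
  rw [kron_apply, hrow, Fin.coe_divNat, Nat.div_div_eq_div_mul, mul_comm q s]
  simp [Jmat]

lemma HasBlockIndicatorRows.kron {m₁ n₁ m l : ℕ} {A : Matrix (Fin m₁) (Fin n₁) ℤ}
    {X : Matrix (Fin m) (Fin l) ℤ} (hA : HasBlockIndicatorRows 1 A)
    (hX : HasBlockIndicatorRows s X) (hs : 0 < s) (hsl : s ∣ l) :
    HasBlockIndicatorRows s (kron A X) := by
  obtain ⟨d, rfl⟩ := hsl
  intro i
  obtain ⟨c, hc, hArow⟩ := hA i.divNat
  obtain ⟨b, hb, hXrow⟩ := hX i.modNat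
  have hbd : b < d := Nat.le_of_mul_le_mul_left hb hs
  refine ⟨c * d + b, ?_, fun j => ?_⟩
  · calc s * (c * d + b + 1) ≤ s * (d * (c + 1)) := by gcongr; nlinarith
      _ ≤ s * (d * n₁) := by gcongr; omega
      _ = n₁ * (s * d) := by ring
  · rw [kron_apply, hArow, hXrow, Fin.coe_divNat, Fin.coe_modNat, Nat.div_one,
      ← Nat.div_div_eq_div_mul, Nat.mod_mul_right_div_self, ite_zero_mul_ite_zero, mul_one]
    refine if_congr ?_ rfl rfl
    rw [Nat.div_mod_unique (by omega), mul_comm d c]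
    omega

lemma HasBlockColSums.kron {m₁ n₁ p l : ℕ} {c₁ c₂ : ℤ} {A : Matrix (Fin m₁) (Fin n₁) ℤ}
    {Y : Matrix (Fin p) (Fin l) ℤ} (hA : HasBlockColSums s c₁ A) (hY : ∀ j, ∑ k, Y k j = c₂)
    (hp : 0 < p) : HasBlockColSums (s * p) (c₁ * c₂) (kron A Y) := by
  intro j b hb
  obtain ⟨⟨c, j⟩, rfl⟩ := finProdFinEquiv.surjective j
  have hb' : s * (b + 1) ≤ m₁ := Nat.le_of_mul_le_mul_right (by linarith) hp
  have hdiv (x : Fin m₁ × Fin p) : (finProdFinEquiv x).val / (s * p) = x.1.val / s := by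
    rw [finProdFinEquiv_apply_val, mul_comm s, ← Nat.div_div_eq_div_mul,
      Nat.add_mul_div_left _ _ hp, Nat.div_eq_of_lt x.2.isLt, zero_add]
  calc ∑ i : Fin (m₁ * p) with i.val / (s * p) = b, _root_.kron A Y i (finProdFinEquiv (c, j))
      = ∑ x : Fin m₁ × Fin p, if x.1.val / s = b then A x.1 c * Y x.2 j else 0 := by
        rw [Finset.sum_filter, ← finProdFinEquiv.sum_comp]
        simp only [hdiv, kron_apply_finProdFinEquiv]
    _ = ∑ r with r.val / s = b, A r c * ∑ k, Y k j := by
        rw [Fintype.sum_prod_type, Finset.sum_filter]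
        refine Finset.sum_congr rfl fun r _ => ?_
        split_ifs <;> simp [Finset.mul_sum]
    _ = c₁ * c₂ := by rw [hY, ← Finset.sum_mul, hA c b hb']

end Kronecker

lemma hasBlockIndicatorRows_Jmat_one (m : ℕ) : HasBlockIndicatorRows 1 (Jmat m 1) :=
  fun _ => ⟨0, le_rfl, fun j => by simp [Jmat, Fin.fin_one_eq_zero j]⟩

lemma hasBlockIndicatorRows_Kmat (m : ℕ) : HasBlockIndicatorRows 1 (Kmat m) :=
  fun i => ⟨m - 1 - i, by omega, fun j => by simp [Kmat]⟩

lemma hasBlockIndicatorRows_one (m : ℕ) :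
    HasBlockIndicatorRows 1 (1 : Matrix (Fin m) (Fin m) ℤ) :=
  fun i => ⟨i, by omega, fun j => by simp [one_apply, Fin.ext_iff, eq_comm]⟩

lemma hasBlockColSums_Jmat {s : ℕ} (hs : 0 < s) (m l : ℕ) : HasBlockColSums s s (Jmat m l) := by
  intro j b hb
  simp [Fin.sum_filter_div_eq hs hb, Jmat]

lemma sum_Kmat_apply {m : ℕ} (j : Fin m) : ∑ i, Kmat m i j = 1 := by
  have hrev (i : Fin m) : (j : ℕ) = m - 1 - i ↔ i = j.rev := by
    rw [Fin.ext_iff, Fin.val_rev]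
    omega
  simp [Kmat, hrev]

section Recursion

variable {t : ℕ}

lemma hasBlockIndicatorRows_Pmat (n : ℕ) : HasBlockIndicatorRows (t * 2 ^ n) (Pmat t n) := by
  have h := ((hasBlockIndicatorRows_Jmat_one (2 ^ n)).kron (hasBlockIndicatorRows_Kmat (2 ^ n))
    one_pos (one_dvd _)).kron_Jmat (p := t) (q := t * 2 ^ n)
  refine .castM ?_ _ _
  rwa [one_mul] at h

lemma hasBlockColSums_Pmat (ht : 0 < t) (n : ℕ) : HasBlockColSums (t * 2 ^ n) t (Pmat t n) := by
  have h := ((hasBlockColSums_Jmat one_pos (2 ^ n) 1).kron (sum_Kmat_apply (m := 2 ^ n))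
    (by positivity)).kron (fun _ => by simp [Jmat] : ∀ j, ∑ i, Jmat t (t * 2 ^ n) i j = t) ht
  refine .castM ?_ _ _
  convert h using 1 <;> ring

variable {v : ℕ}

lemma hasBlockIndicatorRows_Bmat (ht : 0 < t) {B₁ : Matrix (Fin v) (Fin (4 * t)) ℤ}
    (hB₁ : HasBlockIndicatorRows (2 * t) B₁) :
    ∀ n, HasBlockIndicatorRows (t * 2 ^ (n + 1)) (Bmat t v B₁ (n + 1))
  | 0 => by
    rw [Bmat]
    refine .castM ?_ _ _
    rwa [zero_add, pow_one, mul_comm]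
  | n + 1 => by
    have hs : 0 < t * 2 ^ (n + 1) := by positivity
    have hdvd : t * 2 ^ (n + 1) ∣ t * 4 ^ (n + 1) :=
      mul_dvd_mul_left t (pow_dvd_pow_of_dvd (by norm_num) _)
    rw [Bmat, show t * 2 ^ (n + 1 + 1) = t * 2 ^ (n + 1) * 2 by ring]
    exact .castM (.vstack
      (((hasBlockIndicatorRows_Kmat 2).kron (hasBlockIndicatorRows_Bmat ht hB₁ n) hs hdvd).kron_Jmat)
      (((hasBlockIndicatorRows_one 2).kron (hasBlockIndicatorRows_Pmat (n + 1)) hs hdvd).kron_Jmat))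
      _ _

lemma hasBlockColSums_Cmat (ht : 0 < t) {C₁ : Matrix (Fin (4 * t)) (Fin v) ℤ}
    (hC₁ : HasBlockColSums (2 * t) t C₁) :
    ∀ n, HasBlockColSums (t * 2 ^ (n + 1)) t (Cmat t v C₁ (n + 1))
  | 0 => by
    rw [Cmat]
    refine .castM ?_ _ _
    rwa [zero_add, pow_one, mul_comm]
  | n + 1 => by
    have hs : 0 < t * 2 ^ (n + 1) := by positivity
    have hJI := (hasBlockColSums_Jmat one_pos (2 ^ (n + 2)) 1).kron
      (fun j => by simp [one_apply] : ∀ j, ∑ i, (1 : Matrix (Fin 2) (Fin 2) ℤ) i j = 1) two_pos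
    have hC := hJI.kron (((hasBlockColSums_Cmat ht hC₁ n).alphaM hs _).sum_eq
      (t_four_pow_div t (n + 1))) (by rw [t_four_pow_div]; positivity)
    have hP := hJI.kron (((hasBlockColSums_Pmat ht (n + 1)).alphaM hs _).sum_eq
      (t_four_pow_div t (n + 1))) (by rw [t_four_pow_div]; positivity)
    rw [Cmat]
    refine .castM ?_ _ _
    convert hC.hstack hP using 1
    · rw [t_four_pow_div]
      ring
    · simp

end Recursion

section Base

variable {t v : ℕ}

lemma hasBlockIndicatorRows_of_halves {B₁ : Matrix (Fin v) (Fin (4 * t)) ℤ}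
    (h : ∀ i, ∃ b : Fin 2, ∀ j : Fin (4 * t),
      B₁ i j = if (j : ℕ) / (2 * t) = (b : ℕ) then 1 else 0) :
    HasBlockIndicatorRows (2 * t) B₁ := by
  intro i
  obtain ⟨b, hb⟩ := h i
  exact ⟨b, by nlinarith [b.isLt], hb⟩

lemma hasBlockColSums_of_halves (ht : 0 < t) {C₁ : Matrix (Fin (4 * t)) (Fin v) ℤ}
    (h01 : ∀ i j, C₁ i j = 0 ∨ C₁ i j = 1)
    (hcard : ∀ j, ∀ b : Fin 2,
      (Finset.univ.filter fun i : Fin (4 * t) =>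
        (i : ℕ) / (2 * t) = (b : ℕ) ∧ C₁ i j = 1).card = t) :
    HasBlockColSums (2 * t) t C₁ := by
  intro j b hb
  have hb2 : b < 2 := by nlinarith
  calc ∑ i : Fin (4 * t) with i.val / (2 * t) = b, C₁ i j
      = ∑ i : Fin (4 * t) with i.val / (2 * t) = b, if C₁ i j = 1 then 1 else 0 := by
        refine Finset.sum_congr rfl fun i _ => ?_
        rcases h01 i j with h | h <;> simp [h]
    _ = t := by
        rw [Finset.sum_boole, Finset.filter_filter, hcard j ⟨b, hb2⟩]

end Base

theorem Bmat_mul_Cmat_general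
    (t v : ℕ) (ht : 0 < t)
    (B₁ : Matrix (Fin v) (Fin (4 * t)) ℤ) (C₁ : Matrix (Fin (4 * t)) (Fin v) ℤ)
    (hC01 : ∀ i j, C₁ i j = 0 ∨ C₁ i j = 1)
    (hblockB : ∀ i : Fin v, ∃! b : Fin 2, ∀ j : Fin (4 * t),
      B₁ i j = if (j : ℕ) / (2 * t) = (b : ℕ) then 1 else 0)
    (hblockC : ∀ j : Fin v, ∀ b : Fin 2,
      (Finset.univ.filter fun i : Fin (4 * t) =>
        (i : ℕ) / (2 * t) = (b : ℕ) ∧ C₁ i j = 1).card = t)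
    (n : ℕ) (hn : 1 ≤ n) :
    Bmat t v B₁ n * Cmat t v C₁ n = (t : ℤ) • Jmat (vnum v t n) (vnum v t n) := by
  obtain ⟨n, rfl⟩ := Nat.exists_eq_add_of_le' hn
  exact mul_eq_smul_Jmat_of_blocks
    (hasBlockIndicatorRows_Bmat ht (hasBlockIndicatorRows_of_halves fun i => (hblockB i).exists) n)
    (hasBlockColSums_Cmat ht (hasBlockColSums_of_halves ht hC01 hblockC) n)

/-- Equation (12): `B_n · C_n = t · J_{v_n}` where `v_n = (v+(2^{n+1}−4)t)·2^{n−1}`. -/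
theorem Bmat_mul_Cmat
    (t v k : ℕ) (ht : 0 < t) (hv : 0 < v) (hk : 0 < k)
    (B₁ : Matrix (Fin v) (Fin (4 * t)) ℤ) (C₁ : Matrix (Fin (4 * t)) (Fin v) ℤ)
    (hB01 : ∀ i j, B₁ i j = 0 ∨ B₁ i j = 1) (hC01 : ∀ i j, C₁ i j = 0 ∨ C₁ i j = 1)
    (hblockB : ∀ i : Fin v, ∃! b : Fin 2, ∀ j : Fin (4 * t),
      B₁ i j = if (j : ℕ) / (2 * t) = (b : ℕ) then 1 else 0)
    (hblockC : ∀ j : Fin v, ∀ b : Fin 2,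
      (Finset.univ.filter fun i : Fin (4 * t) =>
        (i : ℕ) / (2 * t) = (b : ℕ) ∧ C₁ i j = 1).card = t)
    (n : ℕ) (hn : 1 ≤ n) :
    Bmat t v B₁ n * Cmat t v C₁ n = (t : ℤ) • Jmat (vnum v t n) (vnum v t n) :=
  Bmat_mul_Cmat_general t v ht B₁ C₁ hC01 hblockB hblockC n hn
end
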